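/- Let G be a directed graph, P = p_1...p_ℓ a simple directed path in G, u and v vertices, a ⪯ b two vertices of P, and x a vertex of P with x ∉ V(P[a,b]). Suppose Q = L·R is a u→v path in G−x whose first vertex on P, enter(Q), lies on P[a,b], and L is a satellite u→enter(Q) path. Let u' be the earliest vertex of P[a,b] reachable in G−x from f, where f is the earliest vertex of P[a,b] reachable from u by a satellite path in G. Then (i) Q does not pass through any vertex of P[a,b] earlier than u', and (ii) there exists a u→v walk Q' = L'·R in G−x with enter(Q') ∈ V(P[a,b]), u' ∈ V(L'), and leave(Q') = leave(Q). -/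

import Mathlib

/-! Every vertex of `Q` on `P` lies on `R` (the prefix `L` is a satellite path), so it is
reachable in `G − x` from `enter(Q)`; and `enter(Q)` is reachable from `f` along `P`,
because `f ⪯ enter(Q)` by minimality of `f` and `P[a,b]` avoids `x`. Minimality of `u'`
then gives (i), and in particular `u' ⪯ enter(Q)`. For (ii) take `L' = S · W · P[u', enter(Q)]`,
where `S` is a satellite path `u → f` (it avoids `x` because `x ∈ P`) and `W` is a walk
`f → u'` in `G − x`. The first vertex of `Q'` on `P` is `u` or `f`, and `Q'` still ends
with `R`, whose last vertex on `P` is that of `Q`. -/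

/-- A (directed) walk in digraph `G` from `a` to `b`, given as its list of vertices. -/
def DiWalk {V : Type*} (G : V → V → Prop) (a b : V) (l : List V) : Prop :=
  List.Chain' G l ∧ l.head? = some a ∧ l.getLast? = some b

/-- The graph `G` with the vertex `x` removed (induced subgraph `G − x`). -/
def Del {V : Type*} (G : V → V → Prop) (x : V) : V → V → Prop :=
  fun a b => G a b ∧ a ≠ x ∧ b ≠ x

/-- `Sat G p a b`: there is a satellite walk (internal vertices avoiding `p`)
from `a` to `b` in `G`. -/
def Sat {V : Type*} (G : V → V → Prop) (p : List V) (a b : V) : Prop :=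
  ∃ l, DiWalk G a b l ∧ ∀ w ∈ l.tail.dropLast, w ∉ p

open Relation

section

variable {V : Type*}

theorem List.mem_of_mem_dropLast_cons {a w : V} {t : List V} (h : w ∈ (a :: t).dropLast) :
    w = a ∨ w ∈ t.dropLast := by
  rcases List.eq_nil_or_concat' t with rfl | ⟨s, c, rfl⟩
  · simp at h
  · rwa [List.dropLast_cons_of_ne_nil (by simp), List.mem_cons] at h

theorem List.reflTransGen_getElem_of_forall {R : V → V → Prop} {p : List V} {i j : ℕ}
    (hij : i ≤ j) (hj : j < p.length)
    (h : ∀ k (hk : k + 1 < p.length), i ≤ k → k < j → R p[k] p[k + 1]) :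
    ReflTransGen R p[i] p[j] := by
  induction j, hij using Nat.le_induction with
  | base => rfl
  | succ j hij ih =>
    exact (ih (by omega) fun k hk h₁ h₂ => h k hk h₁ (by omega)).tail (h j hj hij (by omega))

theorem List.exists_cons_eq_append_cons_of_mem {p d r s₁ s₂ : List V} {b y : V} (hb : b ∈ p)
    (h : d ++ b :: r = s₁ ++ y :: s₂) (hs₂ : ∀ w ∈ s₂, w ∉ p) :
    ∃ t, b :: r = t ++ y :: s₂ := by
  rcases List.append_eq_append_iff.1 h with ⟨t, -, ht⟩ | ⟨c, -, hc⟩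
  · exact ⟨t, ht⟩
  · rcases c with _ | ⟨c₀, c⟩
    · exact ⟨[], by simpa using hc.symm⟩
    · obtain ⟨-, rfl⟩ := List.cons_eq_cons.1 hc
      exact absurd hb (hs₂ b (by simp))

theorem Del.ne_of_reflTransGen {G : V → V → Prop} {x a b : V}
    (h : ReflTransGen (Del G x) a b) (hb : b ≠ x) : a ≠ x := by
  rcases h.cases_head with rfl | ⟨c, hac, -⟩
  exacts [hb, hac.2.1]

namespace DiWalk

variable {R : V → V → Prop} {p l l₁ l₂ : List V} {a b c w : V}

theorem eq_cons (h : DiWalk R a b l) : l = a :: l.tail :=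
  List.eq_cons_of_mem_head? h.2.1

theorem dropLast_append (h : DiWalk R a b l) : l.dropLast ++ [b] = l :=
  List.dropLast_append_getLast? b h.2.2

theorem head_mem (h : DiWalk R a b l) : a ∈ l :=
  h.eq_cons ▸ List.mem_cons_self

theorem getLast_mem (h : DiWalk R a b l) : b ∈ l :=
  List.mem_of_getLast? h.2.2

theorem mem_dropLast_or_eq (h : DiWalk R a b l) (hw : w ∈ l) : w ∈ l.dropLast ∨ w = b := by
  rw [← h.dropLast_append] at hw
  simpa using hw

theorem mem_of_mem_dropLast (h : DiWalk R a b l) (hw : w ∈ l.dropLast) :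
    w = a ∨ w ∈ l.tail.dropLast := by
  rw [h.eq_cons] at hw
  exact List.mem_of_mem_dropLast_cons hw

theorem mono {S : V → V → Prop} (hRS : ∀ ⦃a b⦄, R a b → S a b) (h : DiWalk R a b l) :
    DiWalk S a b l :=
  ⟨h.1.imp hRS, h.2⟩

theorem append (h₁ : DiWalk R a b l₁) (h₂ : DiWalk R b c l₂) :
    DiWalk R a c (l₁ ++ l₂.tail) := by
  have hl : l₁ ++ l₂.tail = l₁.dropLast ++ l₂ := by
    rw [← h₁.dropLast_append, List.append_assoc, List.singleton_append, ← h₂.eq_cons,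
      List.dropLast_concat]
  have hch : List.IsChain R l₁ := h₁.1
  rw [← h₁.dropLast_append, List.isChain_append] at hch
  refine ⟨?_, by simp [List.head?_append, h₁.2.1], ?_⟩
  · rw [hl]
    exact hch.1.append h₂.1 (by simpa [h₂.2.1] using hch.2.2)
  · rw [hl, List.getLast?_append, h₂.2.2]
    rfl

theorem reflTransGen_of_mem (h : DiWalk R a b l) (hw : w ∈ l) : ReflTransGen R a w := by
  obtain ⟨hch, ha, -⟩ := h
  induction l generalizing a with
  | nil => simp at hw
  | cons c t ih =>
    obtain rfl : c = a := by simpa using ha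
    rcases List.mem_cons.1 hw with rfl | hw
    · rfl
    · rcases t with _ | ⟨d, t⟩
      · simp at hw
      · rw [List.Chain', List.isChain_cons_cons] at hch
        exact .head hch.1 (ih hw hch.2 rfl)

theorem reflTransGen (h : DiWalk R a b l) : ReflTransGen R a b :=
  h.reflTransGen_of_mem h.getLast_mem

theorem _root_.Relation.ReflTransGen.exists_diWalk (h : ReflTransGen R a b) :
    ∃ l, DiWalk R a b l := by
  obtain ⟨l, hch, hl⟩ := List.exists_isChain_cons_of_relationReflTransGen h
  exact ⟨a :: l, hch, rfl, by rw [List.getLast?_eq_some_getLast (List.cons_ne_nil _ _), hl]⟩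

theorem eq_of_mem_of_dropLast_disjoint (h : DiWalk R a b l) (hl : ∀ w ∈ l.dropLast, w ∉ p)
    (hw : w ∈ l) (hwp : w ∈ p) : w = b :=
  (h.mem_dropLast_or_eq hw).resolve_left fun hw' => hl w hw' hwp

theorem reflTransGen_of_mem_append (h₁ : DiWalk R a b l₁) (hl₁ : ∀ w ∈ l₁.dropLast, w ∉ p)
    (h₂ : DiWalk R b c l₂) (hw : w ∈ l₁ ++ l₂.tail) (hwp : w ∈ p) : ReflTransGen R b w := by
  rcases List.mem_append.1 hw with hw | hw
  · rw [h₁.eq_of_mem_of_dropLast_disjoint hl₁ hw hwp]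
  · exact h₂.reflTransGen_of_mem (List.mem_of_mem_tail hw)

theorem del_of_satellite {x : V} (h : DiWalk R a b l) (hl : ∀ w ∈ l.tail.dropLast, w ∉ p)
    (hx : x ∈ p) (ha : a ≠ x) (hb : b ≠ x) : DiWalk (Del R x) a b l := by
  have hne : ∀ w ∈ l, w ≠ x := by
    rintro w hw rfl
    rcases h.mem_dropLast_or_eq hw with hw | rfl
    · rcases h.mem_of_mem_dropLast hw with rfl | hw
      exacts [ha rfl, hl _ hw hx]
    · exact hb rfl
  refine ⟨?_, h.2⟩
  exact (List.IsChain.iff_mem.1 h.1).imp fun c d ⟨hc, hd, hcd⟩ => ⟨hcd, hne c hc, hne d hd⟩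

theorem exists_first_mem (h : DiWalk R a b l) (hl : ∀ w ∈ l.tail.dropLast, w ∉ p) :
    ∃ c r₁ r₂, l = r₁ ++ c :: r₂ ∧ (∀ w ∈ r₁, w ∉ p) ∧ (a ∈ p ∧ c = a ∨ c = b) := by
  by_cases ha : a ∈ p
  · exact ⟨a, [], l.tail, h.eq_cons, by simp, .inl ⟨ha, rfl⟩⟩
  · refine ⟨b, l.dropLast, [], by simp [h.dropLast_append], fun w hw => ?_, .inr rfl⟩
    rcases h.mem_of_mem_dropLast hw with rfl | hw
    exacts [ha, hl w hw]

end DiWalk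

end

theorem stmt_14_general {V : Type*} (G : V → V → Prop) (p : List V)
    (hchain : List.Chain' G p) (hnodup : p.Nodup) (u v : V)
    (ia ib kx : Fin p.length)
    (hx : (kx : ℕ) < (ia : ℕ) ∨ (ib : ℕ) < (kx : ℕ))
    (ie : Fin p.length) (hie : (ia : ℕ) ≤ (ie : ℕ) ∧ (ie : ℕ) ≤ (ib : ℕ))
    (lL lR : List V)
    (hL : DiWalk (Del G (p.get kx)) u (p.get ie) lL)
    (hLsat : ∀ w ∈ lL.dropLast, w ∉ p)
    (hR : DiWalk (Del G (p.get kx)) (p.get ie) v lR)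
    (jf : Fin p.length)
    (hjf : (ia : ℕ) ≤ (jf : ℕ) ∧ (jf : ℕ) ≤ (ib : ℕ) ∧ Sat G p u (p.get jf) ∧
      ∀ m : Fin p.length, (ia : ℕ) ≤ (m : ℕ) → (m : ℕ) ≤ (ib : ℕ) →
        Sat G p u (p.get m) → (jf : ℕ) ≤ (m : ℕ))
    (ju : Fin p.length)
    (hju : (ia : ℕ) ≤ (ju : ℕ) ∧ (ju : ℕ) ≤ (ib : ℕ) ∧
      Relation.ReflTransGen (Del G (p.get kx)) (p.get jf) (p.get ju) ∧
      ∀ m : Fin p.length, (ia : ℕ) ≤ (m : ℕ) → (m : ℕ) ≤ (ib : ℕ) →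
        Relation.ReflTransGen (Del G (p.get kx)) (p.get jf) (p.get m) →
        (ju : ℕ) ≤ (m : ℕ))
    (ilv : Fin p.length)
    (hleave : ∃ s1 s2, lL ++ lR.tail = s1 ++ (p.get ilv) :: s2 ∧ ∀ w ∈ s2, w ∉ p) :
    ((∀ m : Fin p.length, (ia : ℕ) ≤ (m : ℕ) → (m : ℕ) ≤ (ib : ℕ) →
        p.get m ∈ lL ++ lR.tail → (ju : ℕ) ≤ (m : ℕ)) ∧
      ∃ lL' : List V,
        DiWalk (Del G (p.get kx)) u (p.get ie) lL' ∧ p.get ju ∈ lL' ∧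
        (∃ (ie' : Fin p.length) (r1 r2 : List V),
          lL' ++ lR.tail = r1 ++ (p.get ie') :: r2 ∧ (∀ w ∈ r1, w ∉ p) ∧
          (ia : ℕ) ≤ (ie' : ℕ) ∧ (ie' : ℕ) ≤ (ib : ℕ)) ∧
        (∃ t1 t2 : List V,
          lL' ++ lR.tail = t1 ++ (p.get ilv) :: t2 ∧ ∀ w ∈ t2, w ∉ p)) := by
  have hne (m : Fin p.length) (h₁ : (ia : ℕ) ≤ m) (h₂ : (m : ℕ) ≤ ib) : p.get m ≠ p.get kx := by
    intro h
    have := congrArg Fin.val (hnodup.get_inj_iff.1 h)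
    omega
  have hreach (i j : Fin p.length) (hi : (ia : ℕ) ≤ i) (hij : (i : ℕ) ≤ j) (hj : (j : ℕ) ≤ ib) :
      ReflTransGen (Del G (p.get kx)) (p.get i) (p.get j) :=
    List.reflTransGen_getElem_of_forall hij j.isLt fun k hk h₁ h₂ =>
      ⟨hchain.getElem k hk, hne ⟨k, by omega⟩ (by dsimp; omega) (by dsimp; omega),
        hne ⟨k + 1, hk⟩ (by dsimp; omega) (by dsimp; omega)⟩
  have hf_le_e : (jf : ℕ) ≤ ie := hjf.2.2.2 ie hie.1 hie.2
    ⟨lL, hL.mono fun _ _ h => h.1, fun w hw =>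
      hLsat w (List.mem_of_mem_tail (List.tail_dropLast (l := lL) ▸ hw))⟩
  have hfe := hreach jf ie hjf.1 hf_le_e hie.2
  refine ⟨fun m h₁ h₂ hm => hju.2.2.2 m h₁ h₂
    (hfe.trans (hL.reflTransGen_of_mem_append hLsat hR hm (p.get_mem m))), ?_⟩
  obtain ⟨lS, hS, hSsat⟩ := hjf.2.2.1
  have hS' := hS.del_of_satellite hSsat (p.get_mem kx)
    (Del.ne_of_reflTransGen hL.reflTransGen (hne ie hie.1 hie.2)) (hne jf hjf.1 hjf.2.1)
  obtain ⟨lW, hW⟩ := hju.2.2.1.exists_diWalk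
  obtain ⟨lP, hP⟩ := (hreach ju ie hju.1 (hju.2.2.2 ie hie.1 hie.2 hfe) hie.2).exists_diWalk
  have hL' := (hS'.append hW).append hP
  refine ⟨_, hL', List.mem_append_left _ (hS'.append hW).getLast_mem, ?_, ?_⟩
  · obtain ⟨c, r₁, r₂, hr, hr₁, ⟨hup, rfl⟩ | rfl⟩ := hS.exists_first_mem hSsat
    · refine ⟨ie, r₁, r₂ ++ lW.tail ++ lP.tail ++ lR.tail, ?_, hr₁, hie⟩
      rw [hr, ← hL.eq_of_mem_of_dropLast_disjoint hLsat hL.head_mem hup]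
      simp
    · exact ⟨jf, r₁, r₂ ++ lW.tail ++ lP.tail ++ lR.tail, by rw [hr]; simp, hr₁, hjf.1, hjf.2.1⟩
  · obtain ⟨s₁, s₂, hs, hs₂⟩ := hleave
    rw [← hL.dropLast_append, List.append_assoc, List.singleton_append] at hs
    obtain ⟨t, ht⟩ := List.exists_cons_eq_append_cons_of_mem (p.get_mem ie) hs hs₂
    refine ⟨(lS ++ lW.tail ++ lP.tail).dropLast ++ t, s₂, ?_, hs₂⟩
    rw [List.append_assoc _ t, ← ht]
    conv_lhs => rw [← hL'.dropLast_append]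
    simp

/-- with `a = p.get ia ⪯ b = p.get ib` on `P`, `x = p.get kx ∉ P[a,b]`,
`Q = L·R` a `u → v` walk in `G − x` whose first vertex `enter(Q) = p.get ie` on `P`
lies on `P[a,b]` (`L` being a satellite `u → enter(Q)` walk), `f = p.get jf` the
earliest vertex of `P[a,b]` reachable from `u` by a satellite path in `G`, and
`u' = p.get ju` the earliest vertex of `P[a,b]` reachable from `f` in `G − x`:
(i) `Q` passes through no vertex of `P[a,b]` earlier than `u'`; and
(ii) there is a `u → v` walk `Q' = L'·R` in `G − x` with `enter(Q') ∈ P[a,b]`,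
`u' ∈ L'`, and `leave(Q') = leave(Q)`. -/
theorem stmt_14 {V : Type*} (G : V → V → Prop) (p : List V)
    (hchain : List.Chain' G p) (hnodup : p.Nodup) (u v : V)
    (ia ib kx : Fin p.length) (hab : (ia : ℕ) ≤ (ib : ℕ))
    (hx : (kx : ℕ) < (ia : ℕ) ∨ (ib : ℕ) < (kx : ℕ))
    (ie : Fin p.length) (hie : (ia : ℕ) ≤ (ie : ℕ) ∧ (ie : ℕ) ≤ (ib : ℕ))
    (lL lR : List V)
    (hL : DiWalk (Del G (p.get kx)) u (p.get ie) lL)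
    (hLsat : ∀ w ∈ lL.dropLast, w ∉ p)
    (hR : DiWalk (Del G (p.get kx)) (p.get ie) v lR)
    (jf : Fin p.length)
    (hjf : (ia : ℕ) ≤ (jf : ℕ) ∧ (jf : ℕ) ≤ (ib : ℕ) ∧ Sat G p u (p.get jf) ∧
      ∀ m : Fin p.length, (ia : ℕ) ≤ (m : ℕ) → (m : ℕ) ≤ (ib : ℕ) →
        Sat G p u (p.get m) → (jf : ℕ) ≤ (m : ℕ))
    (ju : Fin p.length)
    (hju : (ia : ℕ) ≤ (ju : ℕ) ∧ (ju : ℕ) ≤ (ib : ℕ) ∧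
      Relation.ReflTransGen (Del G (p.get kx)) (p.get jf) (p.get ju) ∧
      ∀ m : Fin p.length, (ia : ℕ) ≤ (m : ℕ) → (m : ℕ) ≤ (ib : ℕ) →
        Relation.ReflTransGen (Del G (p.get kx)) (p.get jf) (p.get m) →
        (ju : ℕ) ≤ (m : ℕ))
    (ilv : Fin p.length)
    (hleave : ∃ s1 s2, lL ++ lR.tail = s1 ++ (p.get ilv) :: s2 ∧ ∀ w ∈ s2, w ∉ p) :
    ((∀ m : Fin p.length, (ia : ℕ) ≤ (m : ℕ) → (m : ℕ) ≤ (ib : ℕ) →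
        p.get m ∈ lL ++ lR.tail → (ju : ℕ) ≤ (m : ℕ)) ∧
      ∃ lL' : List V,
        DiWalk (Del G (p.get kx)) u (p.get ie) lL' ∧ p.get ju ∈ lL' ∧
        (∃ (ie' : Fin p.length) (r1 r2 : List V),
          lL' ++ lR.tail = r1 ++ (p.get ie') :: r2 ∧ (∀ w ∈ r1, w ∉ p) ∧
          (ia : ℕ) ≤ (ie' : ℕ) ∧ (ie' : ℕ) ≤ (ib : ℕ)) ∧
        (∃ t1 t2 : List V,
          lL' ++ lR.tail = t1 ++ (p.get ilv) :: t2 ∧ ∀ w ∈ t2, w ∉ p)) :=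
  stmt_14_general G p hchain hnodup u v ia ib kx hx ie hie lL lR hL hLsat hR jf hjf ju hju ilv
    hleave
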